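/- arXiv:1006.0026 — 4 statements merged into one kernel-verified Lean document; each statement's English description precedes it below -/
import Mathlib

section
/- Energy equals area for the mixed Dirichlet–Neumann problem (the energy assertion of the discrete uniformization theorems): Let g be the solution of a DN-BVP on a finite network with data (I, L, R, N, k). Then the Dirichlet energy of g equals k times the total flux through R: Σ_{{x,y} ∈ Ē} c(x,y)(g(x) − g(y))² = k · Σ_{x ∈ R} (∂g/∂n)(I)(x), where Ē is the set of edges with at least one endpoint in I. (Thus E(g) = W · H = Area(S) for the rectangle of width W = k and height H = Σ_{x ∈ R} ∂g/∂n(I)(x).) -/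
open Finset

variable {V : Type*}

/-- The combinatorial Laplacian of `u` at `x` in a network with conductance `c`. -/
noncomputable def netLap [Fintype V] (G : SimpleGraph V) [DecidableRel G.Adj]
    (c : V → V → ℝ) (u : V → ℝ) (x : V) : ℝ :=
  ∑ y ∈ G.neighborFinset x, c x y * (u x - u y)

/-- The normal derivative of `u` at `x` with respect to the set `F`. -/
noncomputable def netNormalDeriv [Fintype V] [DecidableEq V] (G : SimpleGraph V)
    [DecidableRel G.Adj] (c : V → V → ℝ) (F : Finset V) (u : V → ℝ) (x : V) : ℝ :=
  ∑ y ∈ (G.neighborFinset x).filter (· ∈ F), c x y * (u x - u y)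

/-- The vertex boundary `δF` of `F`: vertices outside `F` adjacent to some vertex of `F`. -/
def netVertexBoundary [Fintype V] [DecidableEq V] (G : SimpleGraph V) [DecidableRel G.Adj]
    (F : Finset V) : Finset V :=
  univ.filter fun x => x ∉ F ∧ ∃ y ∈ F, G.Adj x y

/-!
Summing `c(x,y) (g x - g y)^2` over darts counts every edge twice, and splitting
`(g x - g y)^2 = g x (g x - g y) + g y (g y - g x)` turns the dart sum into twice
`∑ₓ g x · (flux of g out of x along the edges meeting I)` (discrete Green identity).
That flux is `Δg(x)` at interior vertices and `∂g/∂n(I)(x)` at boundary vertices, so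
harmonicity, `g = 0` on `L` and the Neumann condition on `N` leave only the vertices of `R`,
where `g = k`.
-/

namespace SimpleGraph

variable [Fintype V] (G : SimpleGraph V) [DecidableRel G.Adj]

section Darts

variable {M : Type*} [AddCommMonoid M]

theorem sum_darts_eq_sum_sum_neighborFinset (F : V → V → M) :
    ∑ d : G.Dart, F d.fst d.snd = ∑ x, ∑ y ∈ G.neighborFinset x, F x y := by
  let e : G.Dart ≃ Σ x, G.neighborSet x :=
    { toFun := fun d => ⟨d.fst, d.snd, d.adj⟩
      invFun := fun s => ⟨(s.1, s.2), s.2.2⟩ }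
  rw [Fintype.sum_equiv e (fun d => F d.fst d.snd) (fun s => F s.1 s.2) fun _ => rfl,
    Fintype.sum_sigma]
  exact sum_congr rfl fun x _ => sum_set_coe (f := F x) _

theorem sum_darts_symm (φ : G.Dart → M) : ∑ d : G.Dart, φ d.symm = ∑ d : G.Dart, φ d :=
  Equiv.sum_comp (Dart.symm_involutive.toPerm _) φ

theorem sum_darts_edge_eq_two_nsmul [DecidableEq V] (f : Sym2 V → M) :
    ∑ d : G.Dart, f d.edge = 2 • ∑ e ∈ G.edgeFinset, f e := by
  rw [← sum_fiberwise_of_maps_to (g := Dart.edge) (t := G.edgeFinset)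
    fun d _ => mem_edgeFinset.2 d.edge_mem, smul_sum]
  refine sum_congr rfl fun e he => ?_
  rw [sum_congr rfl fun d hd => congrArg f (mem_filter.1 hd).2, sum_const,
    G.dart_edge_fiber_card e (mem_edgeFinset.1 he)]

end Darts

theorem sum_edgeFinset_filter_energy_eq_sum_mul_flux [DecidableEq V] (c : V → V → ℝ)
    (hc : ∀ x y, c x y = c y x) (p : Sym2 V → Prop) [DecidablePred p] (u : V → ℝ) :
    ∑ e ∈ G.edgeFinset.filter p,
      Sym2.lift ⟨fun x y => c x y * (u x - u y) ^ 2, fun a b => by simp only [hc a b]; ring⟩ e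
    = ∑ x, u x * ∑ y ∈ (G.neighborFinset x).filter (fun y => p s(x, y)),
        c x y * (u x - u y) := by
  set F : V → V → ℝ := fun x y => if p s(x, y) then c x y * (u x * (u x - u y)) else 0
  have hsplit : ∀ x y, (if p s(x, y) then c x y * (u x - u y) ^ 2 else 0) = F x y + F y x := by
    intro x y
    by_cases hp : p s(x, y)
    · simp only [F, hp, Sym2.eq_swap (a := y), if_true, hc y x]
      ring
    · simp only [F, hp, Sym2.eq_swap (a := y), if_false, add_zero]
  have htwice : 2 * ∑ e ∈ G.edgeFinset.filter p,
      Sym2.lift ⟨fun x y => c x y * (u x - u y) ^ 2, fun a b => by simp only [hc a b]; ring⟩ e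
      = 2 * ∑ x, u x * ∑ y ∈ (G.neighborFinset x).filter (fun y => p s(x, y)),
        c x y * (u x - u y) :=
    calc _ = ∑ d : G.Dart, (F d.fst d.snd + F d.symm.fst d.symm.snd) := by
          rw [sum_filter, ← Nat.cast_ofNat, ← nsmul_eq_mul, ← sum_darts_edge_eq_two_nsmul]
          exact sum_congr rfl fun d _ => hsplit d.fst d.snd
      _ = 2 * ∑ d : G.Dart, F d.fst d.snd := by
          rw [sum_add_distrib, sum_darts_symm (φ := fun d => F d.fst d.snd), two_mul]
      _ = _ := by
          rw [sum_darts_eq_sum_sum_neighborFinset G F]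
          simp only [F, sum_filter, mul_sum]
          exact sum_congr rfl fun x _ => sum_congr rfl fun y _ => by split_ifs <;> ring
  linarith

theorem sum_neighborFinset_filter_meets_eq_ite [DecidableEq V] (c : V → V → ℝ) (I : Finset V)
    (u : V → ℝ) (x : V) :
    ∑ y ∈ (G.neighborFinset x).filter (fun y => ∃ z ∈ s(x, y), z ∈ I), c x y * (u x - u y)
      = if x ∈ I then netLap G c u x else netNormalDeriv G c I u x := by
  split_ifs with hx <;> simp [netLap, netNormalDeriv, hx]

end SimpleGraph

/-- Energy equals area for the mixed Dirichlet–Neumann problem: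
`E(g) = k · Σ_{x ∈ R} ∂g/∂n(I)(x)`. -/
theorem dn_bvp_energy_eq_area [Fintype V] [DecidableEq V]
    (G : SimpleGraph V) [DecidableRel G.Adj] (c : V → V → ℝ)
    (hsymm : ∀ x y, c x y = c y x)
    (I L R N : Finset V)
    (hIR : Disjoint I R)
    (hcover : I ∪ L ∪ R ∪ N = univ)
    (k : ℝ) (g : V → ℝ)
    (hgR : ∀ x ∈ R, g x = k) (hgL : ∀ x ∈ L, g x = 0)
    (hharm : ∀ x ∈ I, netLap G c g x = 0)
    (hneu : ∀ x ∈ N, netNormalDeriv G c I g x = 0) :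
    ∑ e ∈ G.edgeFinset.filter (fun e => ∃ x ∈ e, x ∈ I),
      Sym2.lift ⟨fun x y => c x y * (g x - g y) ^ 2,
        fun a b => by simp only [hsymm a b]; ring⟩ e
    = k * ∑ x ∈ R, netNormalDeriv G c I g x := by
  rw [G.sum_edgeFinset_filter_energy_eq_sum_mul_flux c hsymm,
    ← sum_subset (subset_univ R) ?_, mul_sum]
  · simp_rw [G.sum_neighborFinset_filter_meets_eq_ite]
    refine sum_congr rfl fun x hxR => ?_
    rw [if_neg (disjoint_right.1 hIR hxR), hgR x hxR]
  · intro x _ hxR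
    have hx : x ∈ I ∨ x ∈ L ∨ x ∈ N := by simpa [hxR, ← hcover] using mem_univ x
    rw [G.sum_neighborFinset_filter_meets_eq_ite]
    rcases hx with hxI | hxL | hxN
    · rw [if_pos hxI, hharm x hxI, mul_zero]
    · rw [hgL x hxL, zero_mul]
    · split_ifs with hxI
      · rw [hharm x hxI, mul_zero]
      · rw [hneu x hxN, mul_zero]
end

section
/- Energy assertion of the discrete uniformization of an annulus (pure Dirichlet problem): Let (V,E,c) be a finite network whose vertex set is partitioned as V = I ⊔ E₁ ⊔ E₂ with E₁, E₂ nonempty, no two vertices of E₁ ∪ E₂ adjacent, and every vertex of E₁ ∪ E₂ adjacent to some vertex of I. Let k > 0 and let g : V → ℝ satisfy g = k on E₁, g = 0 on E₂, and Δg(x) = 0 for all x ∈ I. Then the Dirichlet energy of g equals k · C, where C = Σ_{x ∈ E₁} (∂g/∂n)(I)(x); that is, Σ_{{x,y} ∈ Ē} c(x,y)(g(x) − g(y))² = k · C, the area of the straight Euclidean cylinder of height k and circumference C. -/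
/-
Splitting `c(x,y)(g x - g y)²` as `c(x,y) g x (g x - g y) + c(y,x) g y (g y - g x)` and
regrouping by the first vertex gives the discrete first Green identity
  `Σ_{edges meeting I} c (g x - g y)² = Σ_{x ∈ I} g x Δg(x) + Σ_{x ∉ I} g x ∂g/∂n(I)(x)`.
The first sum vanishes because `g` is harmonic on `I`; the vertices outside `I` are those of
`E₁`, where `g = k`, and those of `E₂`, where `g = 0` and which contribute nothing.
-/

open Finset

variable {V : Type*}

namespace SimpleGraph

variable [Fintype V] [DecidableEq V] (G : SimpleGraph V) [DecidableRel G.Adj]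

lemma filter_sym2_mk_eq_of_adj {p : Sym2 V → Prop} [DecidablePred p] {a b : V}
    (hab : G.Adj a b) (hp : p s(a, b)) :
    {q ∈ univ.filter (fun q : V × V => G.Adj q.1 q.2 ∧ p s(q.1, q.2)) | s(q.1, q.2) = s(a, b)}
      = {(a, b), (b, a)} := by
  ext ⟨x, y⟩
  simp only [mem_filter, mem_univ, true_and, mem_insert, mem_singleton, Prod.mk.injEq,
    Sym2.eq_iff]
  constructor
  · exact And.right
  · rintro (⟨rfl, rfl⟩ | ⟨rfl, rfl⟩)
    · exact ⟨⟨hab, hp⟩, .inl ⟨rfl, rfl⟩⟩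
    · exact ⟨⟨hab.symm, Sym2.eq_swap ▸ hp⟩, .inr ⟨rfl, rfl⟩⟩

theorem sum_edgeFinset_filter_lift_add_swap {M : Type*} [AddCommMonoid M]
    (p : Sym2 V → Prop) [DecidablePred p] (F : V → V → M) :
    ∑ e ∈ G.edgeFinset.filter p,
        Sym2.lift ⟨fun x y => F x y + F y x, fun _ _ => add_comm _ _⟩ e
      = ∑ x, ∑ y ∈ (G.neighborFinset x).filter (fun y => p s(x, y)), F x y := by
  have hmaps : ∀ q ∈ univ.filter (fun q : V × V => G.Adj q.1 q.2 ∧ p s(q.1, q.2)),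
      s(q.1, q.2) ∈ G.edgeFinset.filter p := by
    rintro ⟨x, y⟩ hq
    simpa using hq
  have hpairs : ∑ x, ∑ y ∈ (G.neighborFinset x).filter (fun y => p s(x, y)), F x y
      = ∑ q ∈ univ.filter (fun q : V × V => G.Adj q.1 q.2 ∧ p s(q.1, q.2)), F q.1 q.2 := by
    simp only [sum_filter, Fintype.sum_prod_type, neighborFinset_eq_filter, ite_and]
  rw [hpairs, ← sum_fiberwise_of_maps_to hmaps]
  refine sum_congr rfl fun e he => ?_
  induction e using Sym2.ind with
  | _ a b =>
    obtain ⟨hab, hp⟩ : G.Adj a b ∧ p s(a, b) := by simpa using he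
    rw [filter_sym2_mk_eq_of_adj G hab hp, sum_pair fun h => hab.ne (congrArg Prod.fst h),
      Sym2.lift_mk]

end SimpleGraph

open SimpleGraph

theorem energy_eq_sum_mul_netLap_add_sum_mul_netNormalDeriv [Fintype V]
    [DecidableEq V] (G : SimpleGraph V) [DecidableRel G.Adj] (c : V → V → ℝ)
    (hsymm : ∀ x y, c x y = c y x) (I : Finset V) (u : V → ℝ) :
    ∑ e ∈ G.edgeFinset.filter (fun e => ∃ x ∈ e, x ∈ I),
        Sym2.lift ⟨fun x y => c x y * (u x - u y) ^ 2,
          fun a b => by simp only [hsymm a b]; ring⟩ e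
      = ∑ x ∈ I, u x * netLap G c u x + ∑ x ∈ Iᶜ, u x * netNormalDeriv G c I u x := by
  set F : V → V → ℝ := fun x y => c x y * u x * (u x - u y)
  have hsplit : (⟨fun x y => c x y * (u x - u y) ^ 2,
        fun a b => by simp only [hsymm a b]; ring⟩ : { f : V → V → ℝ // ∀ a b, f a b = f b a })
      = ⟨fun x y => F x y + F y x, fun _ _ => add_comm _ _⟩ :=
    Subtype.ext <| funext₂ fun x y => by simp only [F, hsymm y x]; ring
  rw [hsplit, sum_edgeFinset_filter_lift_add_swap, ← sum_add_sum_compl I]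
  congr 1
  · refine sum_congr rfl fun x hx => ?_
    rw [netLap, mul_sum, filter_true_of_mem fun y _ => ⟨x, Sym2.mem_mk_left x y, hx⟩]
    exact sum_congr rfl fun y _ => by ring
  · refine sum_congr rfl fun x hx => ?_
    have hmeet : ∀ y, (∃ z ∈ s(x, y), z ∈ I) ↔ y ∈ I := fun y => by
      simp [mem_compl.1 hx]
    rw [netNormalDeriv, mul_sum, filter_congr fun y _ => hmeet y]
    exact sum_congr rfl fun y _ => by ring

/-- Energy assertion of the discrete uniformization of an annulus (pure Dirichlet problem):
the Dirichlet energy of `g` equals `k · C` where `C = Σ_{x ∈ E₁} ∂g/∂n(I)(x)`, the area of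
the straight Euclidean cylinder of height `k` and circumference `C`. -/
theorem annulus_energy_eq_area [Fintype V] [DecidableEq V]
    (G : SimpleGraph V) [DecidableRel G.Adj] (c : V → V → ℝ)
    (hsymm : ∀ x y, c x y = c y x)
    (I E1 E2 : Finset V)
    (hIE1 : Disjoint I E1) (hIE2 : Disjoint I E2) (hE1E2 : Disjoint E1 E2)
    (hcover : I ∪ E1 ∪ E2 = univ)
    (k : ℝ) (g : V → ℝ)
    (hgE1 : ∀ x ∈ E1, g x = k) (hgE2 : ∀ x ∈ E2, g x = 0)
    (hharm : ∀ x ∈ I, netLap G c g x = 0) :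
    ∑ e ∈ G.edgeFinset.filter (fun e => ∃ x ∈ e, x ∈ I),
      Sym2.lift ⟨fun x y => c x y * (g x - g y) ^ 2,
        fun a b => by simp only [hsymm a b]; ring⟩ e
    = k * ∑ x ∈ E1, netNormalDeriv G c I g x := by
  have hcompl : Iᶜ = E1 ∪ E2 :=
    IsCompl.compl_eq ⟨disjoint_union_right.2 ⟨hIE1, hIE2⟩,
      codisjoint_iff.2 (by rw [sup_eq_union, ← union_assoc, hcover, top_eq_univ])⟩
  have hE1 : ∀ x ∈ E1, g x * netNormalDeriv G c I g x = k * netNormalDeriv G c I g x :=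
    fun x hx => by rw [hgE1 x hx]
  rw [energy_eq_sum_mul_netLap_add_sum_mul_netNormalDeriv G c hsymm, hcompl, sum_union hE1E2,
    sum_eq_zero fun x hx => by rw [hharm x hx, mul_zero],
    sum_eq_zero (s := E2) fun x hx => by rw [hgE2 x hx, zero_mul], sum_congr rfl hE1, mul_sum,
    zero_add, add_zero]
end

section
/- All level cuts carry the same flux (Proposition on lengths of level curves, first assertion, graph form): Let (V,E,c) be a finite network with V = I ⊔ E₁ ⊔ E₂, where E₁, E₂ are nonempty, no two vertices of E₁ ∪ E₂ are adjacent, and every vertex of E₁ ∪ E₂ is adjacent to some vertex of I. Let k > 0 and let g : V → ℝ satisfy g = k on E₁, g = 0 on E₂, and Δg(x) = 0 for all x ∈ I. Let S ⊆ I be a set with no two vertices of S adjacent such that V ∖ S = O₁ ⊔ O₂, no vertex of O₁ is adjacent to any vertex of O₂, E₁ ⊆ O₁ and E₂ ⊆ O₂. Then Σ_{x ∈ S} Σ_{y ∈ O₁, y adjacent to x} c(x,y)(g(y) − g(x)) = Σ_{x ∈ E₁} (∂g/∂n)(I)(x); that is, every separating level cut has the same flux-gradient length as the boundary component E₁. 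-/
open Finset

variable {V : Type*}

/-!
Sum the harmonicity equations over `O₁`. By the discrete Green identity the interior
contributions cancel in pairs, so `∑_{O₁} Δg` is the total flux across the edges leaving `O₁`,
and every such edge ends in `S`. On the other hand `Δg` vanishes on `O₁ ∖ E₁ ⊆ I`, and on `E₁`,
whose neighbours all lie in `I`, it is the normal derivative with respect to `I`.
-/

namespace SimpleGraph

variable [Fintype V] [DecidableEq V] (G : SimpleGraph V) [DecidableRel G.Adj]

theorem neighborFinset_filter_mem (x : V) (B : Finset V) :
    (G.neighborFinset x).filter (· ∈ B) = B.filter (G.Adj x) := by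
  ext y
  simp [and_comm]

theorem sum_sum_neighborFinset_filter_comm {M : Type*} [AddCommMonoid M] (F : V → V → M) (A B : Finset V) :
    ∑ x ∈ A, ∑ y ∈ (G.neighborFinset x).filter (· ∈ B), F x y
      = ∑ y ∈ B, ∑ x ∈ (G.neighborFinset y).filter (· ∈ A), F x y := by
  simp only [neighborFinset_filter_mem, sum_filter]
  rw [sum_comm]
  exact sum_congr rfl fun y _ => sum_congr rfl fun x _ => if_congr (G.adj_comm x y) rfl rfl

theorem sum_sum_neighborFinset_filter_eq_zero_of_antisymm (F : V → V → ℝ)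
    (hF : ∀ x y, F y x = -F x y) (A : Finset V) :
    ∑ x ∈ A, ∑ y ∈ (G.neighborFinset x).filter (· ∈ A), F x y = 0 := by
  have h : ∑ x ∈ A, ∑ y ∈ (G.neighborFinset x).filter (· ∈ A), F x y
      = -∑ x ∈ A, ∑ y ∈ (G.neighborFinset x).filter (· ∈ A), F x y := by
    conv_lhs => rw [G.sum_sum_neighborFinset_filter_comm]
    simp only [← sum_neg_distrib]
    exact sum_congr rfl fun y _ => sum_congr rfl fun x _ => hF y x
  linarith

end SimpleGraph

section Network

variable [Fintype V] [DecidableEq V] (G : SimpleGraph V) [DecidableRel G.Adj]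
  (c : V → V → ℝ) (u : V → ℝ)

theorem sum_netLap_eq_sum_exterior_flux (hsymm : ∀ x y, c x y = c y x) (A : Finset V) :
    ∑ x ∈ A, netLap G c u x
      = ∑ x ∈ A, ∑ y ∈ (G.neighborFinset x).filter (· ∉ A), c x y * (u x - u y) := by
  have hinterior :
      ∑ x ∈ A, ∑ y ∈ (G.neighborFinset x).filter (· ∈ A), c x y * (u x - u y) = 0 :=
    G.sum_sum_neighborFinset_filter_eq_zero_of_antisymm _
      (fun x y => by rw [hsymm]; ring) A
  simp only [netLap, ← sum_filter_add_sum_filter_not (G.neighborFinset _) (· ∈ A),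
    sum_add_distrib, hinterior, zero_add]

theorem netNormalDeriv_eq_netLap {F : Finset V} {x : V} (hF : ∀ y, G.Adj x y → y ∈ F) :
    netNormalDeriv G c F u x = netLap G c u x := by
  rw [netNormalDeriv, netLap, filter_true_of_mem fun y hy => hF y (by simpa using hy)]

end Network

theorem level_cut_flux_eq_boundary_flux_general [Fintype V] [DecidableEq V]
    (G : SimpleGraph V) [DecidableRel G.Adj] (c : V → V → ℝ)
    (hsymm : ∀ x y, c x y = c y x)
    (I E1 E2 : Finset V)
    (hcover : I ∪ E1 ∪ E2 = univ)
    (hbdry_nonadj : ∀ x ∈ E1 ∪ E2, ∀ y ∈ E1 ∪ E2, ¬ G.Adj x y)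
    (g : V → ℝ)
    (hharm : ∀ x ∈ I, netLap G c g x = 0)
    (S O1 O2 : Finset V)
    (hO12 : Disjoint O1 O2) (hsplit : univ \ S = O1 ∪ O2)
    (hOnadj : ∀ x ∈ O1, ∀ y ∈ O2, ¬ G.Adj x y)
    (hE1O1 : E1 ⊆ O1) (hE2O2 : E2 ⊆ O2) :
    ∑ x ∈ S, ∑ y ∈ (G.neighborFinset x).filter (· ∈ O1), c x y * (g y - g x)
    = ∑ x ∈ E1, netNormalDeriv G c I g x := by
  have hmem : ∀ y, y ∈ O1 ∪ O2 ↔ y ∉ S := by simp [← hsplit]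
  have hexit : ∀ x ∈ O1, ∀ y, G.Adj x y → (y ∉ O1 ↔ y ∈ S) := fun x hx y hxy =>
    ⟨fun hy => by_contra fun hyS => hOnadj x hx y (by simpa [hy] using (hmem y).2 hyS) hxy,
      fun hyS hy => (hmem y).1 (mem_union_left _ hy) hyS⟩
  have hcases : ∀ y, y ∈ I ∨ y ∈ E1 ∨ y ∈ E2 := fun y => by
    have hy : y ∈ I ∪ E1 ∪ E2 := hcover ▸ mem_univ y
    simpa [or_assoc] using hy
  have hE1_nbrs : ∀ x ∈ E1, ∀ y, G.Adj x y → y ∈ I := fun x hx y hxy =>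
    (hcases y).resolve_right fun hy => hbdry_nonadj x (mem_union_left _ hx) y
      (by simpa using hy) hxy
  have hO1_interior : ∀ x ∈ O1, x ∉ E1 → x ∈ I := fun x hx hxE1 =>
    ((hcases x).resolve_right (not_or_intro hxE1
      fun hxE2 => disjoint_left.1 hO12 hx (hE2O2 hxE2)))
  calc _ = ∑ x ∈ O1, ∑ y ∈ (G.neighborFinset x).filter (· ∈ S), c x y * (g x - g y) := by
          rw [G.sum_sum_neighborFinset_filter_comm]
          simp only [hsymm _]
    _ = ∑ x ∈ O1, ∑ y ∈ (G.neighborFinset x).filter (· ∉ O1), c x y * (g x - g y) :=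
          sum_congr rfl fun x hx => by
            rw [filter_congr fun y hy => (hexit x hx y (by simpa using hy)).symm]
    _ = ∑ x ∈ O1, netLap G c g x := (sum_netLap_eq_sum_exterior_flux G c g hsymm O1).symm
    _ = ∑ x ∈ E1, netLap G c g x :=
          (sum_subset hE1O1 fun x hx hxE1 => hharm x (hO1_interior x hx hxE1)).symm
    _ = _ := sum_congr rfl fun x hx => (netNormalDeriv_eq_netLap G c g (hE1_nbrs x hx)).symm

/-- All level cuts carry the same flux: for a separating set `S` between the two boundary
components of the annulus, the flux through `S` toward the `O₁`-side equals the flux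
through the boundary component `E₁`. -/
theorem level_cut_flux_eq_boundary_flux [Fintype V] [DecidableEq V]
    (G : SimpleGraph V) [DecidableRel G.Adj] (c : V → V → ℝ)
    (hsymm : ∀ x y, c x y = c y x)
    (hpos : ∀ x y, G.Adj x y → 0 < c x y)
    (hzero : ∀ x y, ¬ G.Adj x y → c x y = 0)
    (I E1 E2 : Finset V)
    (hE1ne : E1.Nonempty) (hE2ne : E2.Nonempty)
    (hIE1 : Disjoint I E1) (hIE2 : Disjoint I E2) (hE1E2 : Disjoint E1 E2)
    (hcover : I ∪ E1 ∪ E2 = univ)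
    (hbdry_nonadj : ∀ x ∈ E1 ∪ E2, ∀ y ∈ E1 ∪ E2, ¬ G.Adj x y)
    (hbdry_adj : ∀ x ∈ E1 ∪ E2, ∃ y ∈ I, G.Adj x y)
    (k : ℝ) (hk : 0 < k) (g : V → ℝ)
    (hgE1 : ∀ x ∈ E1, g x = k) (hgE2 : ∀ x ∈ E2, g x = 0)
    (hharm : ∀ x ∈ I, netLap G c g x = 0)
    (S O1 O2 : Finset V) (hSsub : S ⊆ I)
    (hSnadj : ∀ x ∈ S, ∀ y ∈ S, ¬ G.Adj x y)
    (hO12 : Disjoint O1 O2) (hsplit : univ \ S = O1 ∪ O2)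
    (hOnadj : ∀ x ∈ O1, ∀ y ∈ O2, ¬ G.Adj x y)
    (hE1O1 : E1 ⊆ O1) (hE2O2 : E2 ⊆ O2) :
    ∑ x ∈ S, ∑ y ∈ (G.neighborFinset x).filter (· ∈ O1), c x y * (g y - g x)
    = ∑ x ∈ E1, netNormalDeriv G c I g x :=
  level_cut_flux_eq_boundary_flux_general G c hsymm I E1 E2 hcover hbdry_nonadj g hharm S O1 O2 hO12
    hsplit hOnadj hE1O1 hE2O2
end

section
/- Existence and uniqueness for the discrete Dirichlet problem: Let (V,E,c) be a finite connected network, let D ⊆ V be nonempty, and let φ : D → ℝ. Then there exists a unique function g : V → ℝ such that g(x) = φ(x) for all x ∈ D and Δg(x) = 0 for all x ∈ V ∖ D. -/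
open Finset

variable {V : Type*}

/-!
The Dirichlet problem is a square linear system: `g ↦ (g|_D, (Δg)|_{V ∖ D})` maps `ℝ^V` to a
space of the same dimension `|D| + |V ∖ D| = |V|`, so it suffices to show it is injective.
If `g` vanishes on `D` and is harmonic off `D`, then `∑ₓ g(x) Δg(x) = 0`, and Green's identity
`2 ∑ₓ g(x) Δg(x) = ∑ₓ ∑_{y ~ x} c(x,y) (g(x) - g(y))²` forces `g` to be constant along edges,
hence constant on the connected graph, hence zero because `D` is nonempty.
-/

theorem SimpleGraph.Reachable.eq_of_forall_adj {α : Type*} {G : SimpleGraph V} {f : V → α}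
    (hf : ∀ x y, G.Adj x y → f x = f y) {x y : V} (hxy : G.Reachable x y) : f x = f y := by
  obtain ⟨w⟩ := hxy
  induction w with
  | nil => rfl
  | cons hadj _ ih => exact (hf _ _ hadj).trans ih

section Network

variable [Fintype V] (G : SimpleGraph V) [DecidableRel G.Adj] (c : V → V → ℝ)

noncomputable def netLapLinear : (V → ℝ) →ₗ[ℝ] V → ℝ where
  toFun := netLap G c
  map_add' u v := funext fun x => by
    simp only [netLap, Pi.add_apply, ← sum_add_distrib]
    exact sum_congr rfl fun y _ => by ring
  map_smul' a u := funext fun x => by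
    simp only [netLap, Pi.smul_apply, smul_eq_mul, RingHom.id_apply, mul_sum]
    exact sum_congr rfl fun y _ => by ring

theorem netLapLinear_apply (u : V → ℝ) : netLapLinear G c u = netLap G c u := rfl

variable {G c}

theorem two_mul_sum_mul_netLap (hsymm : ∀ x y, c x y = c y x) (u : V → ℝ) :
    2 * ∑ x, u x * netLap G c u x =
      ∑ x, ∑ y ∈ G.neighborFinset x, c x y * (u x - u y) ^ 2 := by
  have hsum : ∑ x, u x * netLap G c u x =
      ∑ x, ∑ y ∈ G.neighborFinset x, c x y * u x * (u x - u y) :=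
    sum_congr rfl fun x _ => by
      rw [netLap, mul_sum]
      exact sum_congr rfl fun y _ => by ring
  have hswap : ∑ x, ∑ y ∈ G.neighborFinset x, c x y * u x * (u x - u y) =
      ∑ y, ∑ x ∈ G.neighborFinset y, c x y * u x * (u x - u y) :=
    sum_comm' fun x y => by simp [G.adj_comm x y]
  calc 2 * ∑ x, u x * netLap G c u x
      = ∑ x, ∑ y ∈ G.neighborFinset x, c x y * u x * (u x - u y)
        + ∑ y, ∑ x ∈ G.neighborFinset y, c x y * u x * (u x - u y) := by
        rw [two_mul, hsum, hswap]
    _ = ∑ x, ∑ y ∈ G.neighborFinset x, c x y * (u x - u y) ^ 2 := by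
        rw [← sum_add_distrib]
        refine sum_congr rfl fun x _ => ?_
        rw [← sum_add_distrib]
        exact sum_congr rfl fun y _ => by rw [hsymm y x]; ring

theorem eq_of_adj_of_sum_mul_netLap_eq_zero (hsymm : ∀ x y, c x y = c y x)
    (hpos : ∀ x y, G.Adj x y → 0 < c x y) {u : V → ℝ}
    (hu : ∑ x, u x * netLap G c u x = 0) {x y : V} (hxy : G.Adj x y) : u x = u y := by
  have hnonneg : ∀ x, ∀ y ∈ G.neighborFinset x, 0 ≤ c x y * (u x - u y) ^ 2 := fun x y hy =>
    mul_nonneg (hpos x y ((G.mem_neighborFinset x y).1 hy)).le (sq_nonneg _)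
  have henergy : ∑ x, ∑ y ∈ G.neighborFinset x, c x y * (u x - u y) ^ 2 = 0 := by
    rw [← two_mul_sum_mul_netLap hsymm, hu, mul_zero]
  have hterm : c x y * (u x - u y) ^ 2 = 0 :=
    (sum_eq_zero_iff_of_nonneg (hnonneg x)).1
      ((sum_eq_zero_iff_of_nonneg fun x _ => sum_nonneg (hnonneg x)).1 henergy x (mem_univ x))
      y ((G.mem_neighborFinset x y).2 hxy)
  have hsq := (mul_eq_zero.1 hterm).resolve_left (hpos x y hxy).ne'
  exact sub_eq_zero.1 (pow_eq_zero_iff two_ne_zero |>.1 hsq)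

theorem eq_zero_of_netLap_eq_zero_of_eq_zero_on (hsymm : ∀ x y, c x y = c y x)
    (hpos : ∀ x y, G.Adj x y → 0 < c x y) (hconn : G.Connected) {D : Finset V}
    (hD : D.Nonempty) {u : V → ℝ} (hzero : ∀ x ∈ D, u x = 0)
    (hharm : ∀ x ∉ D, netLap G c u x = 0) : u = 0 := by
  have hu : ∑ x, u x * netLap G c u x = 0 := sum_eq_zero fun x _ => by
    by_cases hx : x ∈ D
    · rw [hzero x hx, zero_mul]
    · rw [hharm x hx, mul_zero]
  obtain ⟨d, hd⟩ := hD
  funext x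
  rw [(hconn x d).eq_of_forall_adj fun _ _ => eq_of_adj_of_sum_mul_netLap_eq_zero hsymm hpos hu,
    hzero d hd, Pi.zero_apply]

variable (G c) in
noncomputable def dirichletMap (D : Finset V) :
    (V → ℝ) →ₗ[ℝ] ({x // x ∈ D} → ℝ) × ({x // x ∉ D} → ℝ) :=
  (LinearMap.funLeft ℝ ℝ Subtype.val).prod
    (LinearMap.funLeft ℝ ℝ Subtype.val ∘ₗ netLapLinear G c)

theorem dirichletMap_eq_iff {D : Finset V} {g : V → ℝ} {φ : {x // x ∈ D} → ℝ} :
    dirichletMap G c D g = (φ, 0) ↔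
      (∀ x (hx : x ∈ D), g x = φ ⟨x, hx⟩) ∧ ∀ x ∉ D, netLap G c g x = 0 := by
  simp [dirichletMap, Prod.ext_iff, funext_iff, LinearMap.funLeft_apply, netLapLinear_apply]

theorem dirichletMap_bijective (hsymm : ∀ x y, c x y = c y x)
    (hpos : ∀ x y, G.Adj x y → 0 < c x y) (hconn : G.Connected) {D : Finset V}
    (hD : D.Nonempty) : Function.Bijective (dirichletMap G c D) := by
  classical
  have hinj : Function.Injective (dirichletMap G c D) := by
    refine (injective_iff_map_eq_zero _).2 fun g hg => ?_
    obtain ⟨hzero, hharm⟩ := dirichletMap_eq_iff.1 hg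
    exact eq_zero_of_netLap_eq_zero_of_eq_zero_on hsymm hpos hconn hD hzero hharm
  have hrank : Module.finrank ℝ (V → ℝ) =
      Module.finrank ℝ (({x // x ∈ D} → ℝ) × ({x // x ∉ D} → ℝ)) := by
    simp only [Module.finrank_prod, Module.finrank_fintype_fun_eq_card, Fintype.card_coe,
      Fintype.card_subtype_compl]
    exact (Nat.add_sub_cancel' D.card_le_univ).symm
  exact ⟨hinj, (LinearMap.injective_iff_surjective_of_finrank_eq_finrank hrank).1 hinj⟩

end Network

theorem dirichlet_problem_existence_uniqueness_general [Fintype V]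
    (G : SimpleGraph V) [DecidableRel G.Adj] (c : V → V → ℝ)
    (hsymm : ∀ x y, c x y = c y x)
    (hpos : ∀ x y, G.Adj x y → 0 < c x y)
    (hconn : G.Connected)
    (D : Finset V) (hD : D.Nonempty) (φ : {x // x ∈ D} → ℝ) :
    ∃! g : V → ℝ, (∀ x (hx : x ∈ D), g x = φ ⟨x, hx⟩)
      ∧ (∀ x ∉ D, netLap G c g x = 0) :=
  (existsUnique_congr fun _ => dirichletMap_eq_iff).1
    ((dirichletMap_bijective hsymm hpos hconn hD).existsUnique (φ, 0))

/-- Existence and uniqueness for the discrete Dirichlet problem on a finite connected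
network: given boundary data `φ` on a nonempty set `D`, there is a unique function `g`
agreeing with `φ` on `D` and harmonic off `D`. -/
theorem dirichlet_problem_existence_uniqueness [Fintype V] [DecidableEq V]
    (G : SimpleGraph V) [DecidableRel G.Adj] (c : V → V → ℝ)
    (hsymm : ∀ x y, c x y = c y x)
    (hpos : ∀ x y, G.Adj x y → 0 < c x y)
    (hzero : ∀ x y, ¬ G.Adj x y → c x y = 0)
    (hconn : G.Connected)
    (D : Finset V) (hD : D.Nonempty) (φ : {x // x ∈ D} → ℝ) :
    ∃! g : V → ℝ, (∀ x (hx : x ∈ D), g x = φ ⟨x, hx⟩)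
      ∧ (∀ x ∉ D, netLap G c g x = 0) :=
  dirichlet_problem_existence_uniqueness_general G c hsymm hpos hconn D hD φ
end
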